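/- arXiv:1802.02547 — 2 statements merged into one kernel-verified Lean document; each statement's English description precedes it below -/
import Mathlib

section
/- Let P₁,…,P_k ∈ {0,1}^{r×n} be a patch structure, α ∈ [0,1], f_w(x) = (1/k)·Σ_{i=1}^k σ_α(wᵀPᵢx), P = Σ_{i,j=1}^k PᵢPⱼᵀ, and let μ be a probability measure on ℝⁿ symmetric about the origin with E_μ[‖x‖⁴] < ∞; set Σ = E_μ[xxᵀ] and P_Σ = Σ_{i,j=1}^k PᵢΣPⱼᵀ. Fix w, w* ∈ ℝ^r and η > 0, and define the realizable Convotron update w' = w + η·(f_{w*}(x) − f_w(x))·Σ_{i=1}^k Pᵢx. Then E_{x∼μ}[‖w' − w*‖²] ≤ (1 − η·((1+α)/k)·λ_min(P_Σ) + η²·λ_max(P)·E_μ[‖x‖⁴])·‖w − w*‖². -/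
/-!
Write `v = w - w*`, `s(x) = ∑ᵢ Pᵢx` and `g = f_{w*} - f_w`, so that `w' - w* = v + η g(x) s(x)` and
`‖w' - w*‖² = ‖v‖² + 2η g⟪v, s⟫ + η² g² ‖s‖²`.

Cross term: since `μ` is symmetric and `s` is odd, only the odd part of `g` contributes, and
`σ_α(z) - σ_α(-z) = (1 + α) z` makes that odd part linear: `g(x) - g(-x) = -((1 + α)/k) ⟪v, s(x)⟫`.
Hence `E[g⟪v, s⟫] = -((1 + α)/2k) vᵀ P_Σ v ≤ -((1 + α)/2k) λ_min(P_Σ) ‖v‖²`.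

Quadratic term: `σ_α` is 1-Lipschitz and each `Pᵢ` only selects coordinates, so `|g(x)| ≤ ‖v‖ ‖x‖`,
while `‖s(x)‖² ≤ λ_max(P) ‖x‖²` because `P = (∑ᵢ Pᵢ)(∑ᵢ Pᵢ)ᵀ`.
-/

open MeasureTheory Matrix Finset
open scoped RealInnerProductSpace

noncomputable section

/-- Leaky ReLU activation with parameter `α`. -/
def lrelu (α z : ℝ) : ℝ := if 0 ≤ z then z else α * z

/-- A patch structure: each `P i` is a 0/1 matrix with exactly one 1 in each row
and at most one 1 in each column. -/
def IsPatchStruct {r n k : ℕ} (P : Fin k → Matrix (Fin r) (Fin n) ℝ) : Prop :=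
  (∀ i a b, P i a b = 0 ∨ P i a b = 1) ∧
  (∀ i a, ∃! b, P i a b = 1) ∧
  (∀ i b a a', P i a b = 1 → P i a' b = 1 → a = a')

/-- View a plain vector as an element of Euclidean space. -/
def toEuc {m : ℕ} (v : Fin m → ℝ) : EuclideanSpace ℝ (Fin m) := WithLp.toLp 2 v

/-- The one-hidden-layer convolutional network
`f_w(x) = (1/k) ∑ i, σ_α (wᵀ Pᵢ x)` with average pooling. -/
def convnet {r n k : ℕ} (α : ℝ) (P : Fin k → Matrix (Fin r) (Fin n) ℝ)
    (w : EuclideanSpace ℝ (Fin r)) (x : EuclideanSpace ℝ (Fin n)) : ℝ :=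
  (1 / (k : ℝ)) * ∑ i, lrelu α ((w : Fin r → ℝ) ⬝ᵥ (P i).mulVec x)

/-- The (uncentered) covariance matrix `Σ = E_{x∼μ}[x xᵀ]`. -/
def covMat {n : ℕ} (μ : Measure (EuclideanSpace ℝ (Fin n))) : Matrix (Fin n) (Fin n) ℝ :=
  Matrix.of fun i j => ∫ x, x i * x j ∂μ

/-- Maximum eigenvalue of a Hermitian (real symmetric) matrix. -/
def lamMax {m : ℕ} (A : Matrix (Fin m) (Fin m) ℝ) (hA : A.IsHermitian) : ℝ :=
  ⨆ i, hA.eigenvalues i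

/-- Minimum eigenvalue of a Hermitian (real symmetric) matrix. -/
def lamMin {m : ℕ} (A : Matrix (Fin m) (Fin m) ℝ) (hA : A.IsHermitian) : ℝ :=
  ⨅ i, hA.eigenvalues i

namespace Matrix

lemma dotProduct_self_nonneg {n : Type*} [Fintype n] (v : n → ℝ) : 0 ≤ v ⬝ᵥ v :=
  Fintype.sum_nonneg fun i => mul_self_nonneg (v i)

lemma sum_sum_mul_mul_transpose {ι m n R : Type*} [Fintype ι] [Fintype n] [CommSemiring R]
    (P : ι → Matrix m n R) (S : Matrix n n R) :
    ∑ i, ∑ j, P i * S * (P j)ᵀ = (∑ i, P i) * S * (∑ i, P i)ᵀ := by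
  simp only [Matrix.sum_mul, Matrix.mul_sum, transpose_sum]
  exact Finset.sum_comm

lemma IsHermitian.exists_dotProduct_mulVec_eq_sum_eigenvalues {m : Type*} [Fintype m]
    [DecidableEq m] {A : Matrix m m ℝ} (hA : A.IsHermitian) (v : m → ℝ) :
    ∃ u : m → ℝ, u ⬝ᵥ u = v ⬝ᵥ v ∧ v ⬝ᵥ A *ᵥ v = ∑ i, hA.eigenvalues i * u i ^ 2 := by
  set U : Matrix m m ℝ := ↑hA.eigenvectorUnitary
  have hUt : star U = Uᵀ := by ext; simp
  have hUU : U * Uᵀ = 1 := hUt ▸ Unitary.mul_star_self_of_mem hA.eigenvectorUnitary.2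
  refine ⟨Uᵀ *ᵥ v, ?_, ?_⟩
  · nth_rewrite 1 [mulVec_transpose]
    rw [← dotProduct_mulVec, mulVec_mulVec, hUU, one_mulVec]
  · conv_lhs => rw [hA.spectral_theorem, Unitary.conjStarAlgAut_apply]
    rw [hUt, ← mulVec_mulVec, ← mulVec_mulVec, dotProduct_mulVec, ← mulVec_transpose]
    simp only [dotProduct, mulVec_diagonal, Function.comp_apply, RCLike.ofReal_real_eq_id, id]
    exact Finset.sum_congr rfl fun i _ => by ring

end Matrix

section EuclideanSpace

lemma real_norm_sq_eq_dotProduct {ι : Type*} [Fintype ι] (x : EuclideanSpace ℝ ι) :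
    ‖x‖ ^ 2 = x.ofLp ⬝ᵥ x.ofLp := by
  rw [← real_inner_self_eq_norm_sq, EuclideanSpace.inner_eq_star_dotProduct, star_trivial]

variable {m n : ℕ}

lemma real_inner_toEuc (u : EuclideanSpace ℝ (Fin m)) (y : Fin m → ℝ) :
    ⟪u, toEuc y⟫ = u.ofLp ⬝ᵥ y := by
  rw [EuclideanSpace.inner_eq_star_dotProduct, star_trivial, dotProduct_comm]
  rfl

lemma continuous_toEuc_mulVec (M : Matrix (Fin m) (Fin n) ℝ) :
    Continuous fun x : EuclideanSpace ℝ (Fin n) => toEuc (M *ᵥ x.ofLp) := by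
  unfold toEuc; fun_prop

lemma exists_norm_toEuc_mulVec_le (M : Matrix (Fin m) (Fin n) ℝ) :
    ∃ C, ∀ x : EuclideanSpace ℝ (Fin n), ‖toEuc (M *ᵥ x.ofLp)‖ ≤ C * ‖x‖ :=
  ⟨_, (LinearMap.toContinuousLinearMap (toEuclideanLin M)).le_opNorm⟩

end EuclideanSpace

section Eigenvalues

variable {m : ℕ} {A : Matrix (Fin m) (Fin m) ℝ}

lemma lamMin_mul_dotProduct_self_le (hA : A.IsHermitian) (v : Fin m → ℝ) :
    lamMin A hA * (v ⬝ᵥ v) ≤ v ⬝ᵥ A *ᵥ v := by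
  obtain ⟨u, hu, hAv⟩ := hA.exists_dotProduct_mulVec_eq_sum_eigenvalues v
  rw [hAv, ← hu, dotProduct, Finset.mul_sum]
  refine Finset.sum_le_sum fun i _ => ?_
  rw [← sq]
  exact mul_le_mul_of_nonneg_right (ciInf_le (Finite.bddBelow_range _) i) (sq_nonneg _)

lemma dotProduct_mulVec_le_lamMax_mul (hA : A.IsHermitian) (v : Fin m → ℝ) :
    v ⬝ᵥ A *ᵥ v ≤ lamMax A hA * (v ⬝ᵥ v) := by
  obtain ⟨u, hu, hAv⟩ := hA.exists_dotProduct_mulVec_eq_sum_eigenvalues v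
  rw [hAv, ← hu, dotProduct, Finset.mul_sum]
  refine Finset.sum_le_sum fun i _ => ?_
  rw [← sq]
  exact mul_le_mul_of_nonneg_right (le_ciSup (Finite.bddAbove_range _) i) (sq_nonneg _)

lemma lamMax_nonneg (hA : A.PosSemidef) : 0 ≤ lamMax A hA.isHermitian :=
  Real.iSup_nonneg hA.eigenvalues_nonneg

/-- By Cauchy–Schwarz, `‖Bx‖⁴ = (xᵀBᵀBx)² ≤ ‖x‖² (Bx)ᵀBBᵀ(Bx)`; this avoids comparing the spectra
of `BBᵀ` and `BᵀB`. -/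
lemma norm_toEuc_mulVec_sq_le_lamMax {n : ℕ} (hA : A.IsHermitian)
    (B : Matrix (Fin m) (Fin n) ℝ) (hAB : A = B * Bᵀ) (x : EuclideanSpace ℝ (Fin n)) :
    ‖toEuc (B *ᵥ x.ofLp)‖ ^ 2 ≤ lamMax A hA * ‖x‖ ^ 2 := by
  rw [real_norm_sq_eq_dotProduct, real_norm_sq_eq_dotProduct, toEuc, WithLp.ofLp_toLp]
  set y := B *ᵥ x.ofLp
  have hlam : 0 ≤ lamMax A hA := by
    subst hAB; exact lamMax_nonneg (posSemidef_self_mul_conjTranspose B)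
  have key : (y ⬝ᵥ y) ^ 2 ≤ (lamMax A hA * (x.ofLp ⬝ᵥ x.ofLp)) * (y ⬝ᵥ y) :=
    calc (y ⬝ᵥ y) ^ 2 = (x.ofLp ⬝ᵥ Bᵀ *ᵥ y) ^ 2 := by
          rw [dotProduct_mulVec, ← mulVec_transpose, dotProduct_comm]
      _ ≤ (x.ofLp ⬝ᵥ x.ofLp) * (Bᵀ *ᵥ y ⬝ᵥ Bᵀ *ᵥ y) := by
          simpa only [dotProduct, sq] using Finset.sum_mul_sq_le_sq_mul_sq univ x.ofLp (Bᵀ *ᵥ y)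
      _ = (x.ofLp ⬝ᵥ x.ofLp) * (y ⬝ᵥ A *ᵥ y) := by
          rw [hAB, ← mulVec_mulVec, dotProduct_mulVec y, ← mulVec_transpose]
      _ ≤ (x.ofLp ⬝ᵥ x.ofLp) * (lamMax A hA * (y ⬝ᵥ y)) := by
          gcongr
          · exact dotProduct_self_nonneg _
          · exact dotProduct_mulVec_le_lamMax_mul hA y
      _ = (lamMax A hA * (x.ofLp ⬝ᵥ x.ofLp)) * (y ⬝ᵥ y) := by ring
  rcases (dotProduct_self_nonneg y).eq_or_lt with h0 | hpos
  · rw [← h0]; exact mul_nonneg hlam (dotProduct_self_nonneg _)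
  · exact le_of_mul_le_mul_right (by nlinarith) hpos

end Eigenvalues

lemma lrelu_sub_lrelu_neg (α z : ℝ) : lrelu α z - lrelu α (-z) = (1 + α) * z := by
  unfold lrelu
  rcases lt_trichotomy z 0 with h | rfl | h
  · rw [if_neg h.not_ge, if_pos (by linarith)]; ring
  · simp
  · rw [if_pos h.le, if_neg (by linarith)]; ring

@[fun_prop]
lemma continuous_lrelu (α : ℝ) : Continuous (lrelu α) :=
  continuous_if_le continuous_const continuous_id continuous_id.continuousOn
    (continuous_const.mul continuous_id).continuousOn fun z hz => by simp [← hz]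

lemma abs_lrelu_sub_lrelu_le {α : ℝ} (hα : |α| ≤ 1) (a b : ℝ) :
    |lrelu α a - lrelu α b| ≤ |a - b| := by
  obtain ⟨h0, h1⟩ := abs_le.mp hα
  unfold lrelu
  rw [abs_le]
  have := le_abs_self (a - b)
  have := neg_abs_le (a - b)
  split_ifs <;> constructor <;> nlinarith

section Patch

variable {r n k : ℕ} {P : Fin k → Matrix (Fin r) (Fin n) ℝ}

lemma IsPatchStruct.exists_injective_mulVec_eq_comp (hP : IsPatchStruct P) (i : Fin k) :
    ∃ c : Fin r → Fin n, Function.Injective c ∧ ∀ x, P i *ᵥ x = x ∘ c := by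
  obtain ⟨h01, hrow, hcol⟩ := hP
  choose c hc hcu using hrow i
  refine ⟨c, fun a a' h => hcol i (c a) a a' (hc a) (h ▸ hc a'), fun x => funext fun a => ?_⟩
  rw [mulVec, dotProduct, Finset.sum_eq_single (c a), hc a, one_mul, Function.comp_apply]
  · intro b _ hb
    rcases h01 i a b with h | h
    · rw [h, zero_mul]
    · exact absurd (hcu a b h) hb
  · exact fun h => absurd (Finset.mem_univ _) h

lemma IsPatchStruct.norm_toEuc_mulVec_le (hP : IsPatchStruct P) (i : Fin k)
    (x : EuclideanSpace ℝ (Fin n)) : ‖toEuc (P i *ᵥ x.ofLp)‖ ≤ ‖x‖ := by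
  obtain ⟨c, hc, hPc⟩ := hP.exists_injective_mulVec_eq_comp i
  rw [← pow_le_pow_iff_left₀ (norm_nonneg _) (norm_nonneg _) two_ne_zero,
    real_norm_sq_eq_dotProduct, real_norm_sq_eq_dotProduct, toEuc, WithLp.ofLp_toLp, hPc]
  calc ∑ a, x (c a) * x (c a) = ∑ b ∈ univ.map ⟨c, hc⟩, x b * x b :=
        (Finset.sum_map univ ⟨c, hc⟩ fun b => x b * x b).symm
    _ ≤ ∑ b, x b * x b := Finset.sum_le_univ_sum_of_nonneg fun b => mul_self_nonneg _

end Patch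

section Integrals

variable {X : Type*} [MeasurableSpace X] {μ : Measure X}

lemma MeasureTheory.Integrable.sq_of_pow_four [IsFiniteMeasure μ] {f : X → ℝ}
    (h : Integrable (fun x => f x ^ 4) μ) (hf : AEStronglyMeasurable f μ) :
    Integrable (fun x => f x ^ 2) μ :=
  ((integrable_const 1).add h).mono' (hf.pow 2) (ae_of_all _ fun x => by
    simp only [Pi.add_apply, norm_pow, Real.norm_eq_abs, sq_abs]
    nlinarith [sq_nonneg (f x ^ 2 - 1)])

lemma integral_norm_add_smul_sq {F : Type*} [NormedAddCommGroup F] [InnerProductSpace ℝ F]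
    [IsProbabilityMeasure μ] (v : F) {g : X → ℝ} {s : X → F} (η : ℝ)
    (hcross : Integrable (fun x => g x * ⟪v, s x⟫) μ)
    (hsq : Integrable (fun x => g x ^ 2 * ‖s x‖ ^ 2) μ) :
    ∫ x, ‖v + (η * g x) • s x‖ ^ 2 ∂μ
      = ‖v‖ ^ 2 + 2 * η * ∫ x, g x * ⟪v, s x⟫ ∂μ + η ^ 2 * ∫ x, g x ^ 2 * ‖s x‖ ^ 2 ∂μ := by
  have hpt : ∀ x, ‖v + (η * g x) • s x‖ ^ 2
      = ‖v‖ ^ 2 + 2 * η * (g x * ⟪v, s x⟫) + η ^ 2 * (g x ^ 2 * ‖s x‖ ^ 2) := fun x => by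
    rw [norm_add_sq_real, real_inner_smul_right, norm_smul, mul_pow, Real.norm_eq_abs, sq_abs]
    ring
  have hlin : Integrable (fun x => ‖v‖ ^ 2 + 2 * η * (g x * ⟪v, s x⟫)) μ :=
    (integrable_const _).add (hcross.const_mul _)
  simp_rw [hpt]
  rw [integral_add hlin (hsq.const_mul _),
    integral_add (integrable_const _) (hcross.const_mul _), integral_const, integral_const_mul,
    integral_const_mul]
  simp

lemma integral_mul_odd_eq_half [AddGroup X] [MeasurableNeg X] [μ.IsNegInvariant] {f h : X → ℝ}
    (hodd : ∀ x, h (-x) = -h x) (hfh : Integrable (fun x => f x * h x) μ) :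
    ∫ x, f x * h x ∂μ = (∫ x, (f x - f (-x)) * h x ∂μ) / 2 := by
  have hflip : ∫ x, f (-x) * h x ∂μ = -∫ x, f x * h x ∂μ := by
    rw [← integral_neg_eq_self (fun x => f x * h x) μ, ← integral_neg]
    simp [hodd]
  have hint : Integrable (fun x => f (-x) * h x) μ := by
    simpa [hodd] using hfh.comp_neg.neg
  simp_rw [sub_mul]
  rw [integral_sub hfh hint, hflip]
  ring

end Integrals

section Covariance

variable {n : ℕ} {μ : Measure (EuclideanSpace ℝ (Fin n))}

lemma integral_dotProduct_sq (hμ : Integrable (fun x => ‖x‖ ^ 2) μ) (b : Fin n → ℝ) :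
    ∫ x, (b ⬝ᵥ x.ofLp) ^ 2 ∂μ = b ⬝ᵥ covMat μ *ᵥ b := by
  have hint : ∀ c d : Fin n, Integrable (fun x : EuclideanSpace ℝ (Fin n) => x c * x d) μ :=
    fun c d => hμ.mono' (by fun_prop : Continuous _).aestronglyMeasurable (ae_of_all _ fun x => by
      rw [norm_mul, sq]
      exact mul_le_mul (PiLp.norm_apply_le x c) (PiLp.norm_apply_le x d) (norm_nonneg _)
        (norm_nonneg _))
  have hpt : ∀ x : EuclideanSpace ℝ (Fin n),
      (b ⬝ᵥ x.ofLp) ^ 2 = ∑ c, ∑ d, b c * b d * (x c * x d) := fun x => by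
    rw [sq, dotProduct, Finset.sum_mul_sum]
    exact Finset.sum_congr rfl fun c _ => Finset.sum_congr rfl fun d _ => by ring
  simp_rw [hpt]
  rw [integral_finsetSum _ fun c _ => integrable_finsetSum _ fun d _ => (hint c d).const_mul _]
  simp_rw [integral_finsetSum _ fun d _ => (hint _ d).const_mul _, integral_const_mul]
  simp only [dotProduct, mulVec, covMat, of_apply, Finset.mul_sum]
  exact Finset.sum_congr rfl fun c _ => Finset.sum_congr rfl fun d _ => by ring

lemma integral_inner_toEuc_mulVec_sq {r : ℕ} (hμ : Integrable (fun x => ‖x‖ ^ 2) μ)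
    (M : Matrix (Fin r) (Fin n) ℝ) (v : EuclideanSpace ℝ (Fin r)) :
    ∫ x, ⟪v, toEuc (M *ᵥ x.ofLp)⟫ ^ 2 ∂μ = v.ofLp ⬝ᵥ (M * covMat μ * Mᵀ) *ᵥ v.ofLp := by
  simp_rw [real_inner_toEuc, dotProduct_mulVec v.ofLp M]
  rw [integral_dotProduct_sq hμ, ← mulVec_mulVec, ← mulVec_mulVec, mulVec_transpose,
    dotProduct_mulVec v.ofLp M]

end Covariance

section Convnet

variable {r n k : ℕ}

lemma convnet_sub_convnet_neg (α : ℝ) (P : Fin k → Matrix (Fin r) (Fin n) ℝ)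
    (w : EuclideanSpace ℝ (Fin r)) (x : EuclideanSpace ℝ (Fin n)) :
    convnet α P w x - convnet α P w (-x) = (1 + α) / k * (w.ofLp ⬝ᵥ (∑ i, P i) *ᵥ x.ofLp) := by
  simp only [convnet, WithLp.ofLp_neg, mulVec_neg, dotProduct_neg, ← mul_sub,
    ← Finset.sum_sub_distrib, lrelu_sub_lrelu_neg, ← Finset.mul_sum, sum_mulVec, dotProduct_sum]
  ring

lemma continuous_convnet (α : ℝ) (P : Fin k → Matrix (Fin r) (Fin n) ℝ)
    (w : EuclideanSpace ℝ (Fin r)) : Continuous (convnet α P w) := by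
  unfold convnet; fun_prop

variable {P : Fin k → Matrix (Fin r) (Fin n) ℝ} {α : ℝ} {μ : Measure (EuclideanSpace ℝ (Fin n))}

lemma abs_convnet_sub_convnet_le (hP : IsPatchStruct P) (hα : |α| ≤ 1)
    (w w' : EuclideanSpace ℝ (Fin r)) (x : EuclideanSpace ℝ (Fin n)) :
    |convnet α P w x - convnet α P w' x| ≤ ‖w - w'‖ * ‖x‖ := by
  have hpatch : ∀ i, |lrelu α (w.ofLp ⬝ᵥ P i *ᵥ x.ofLp) - lrelu α (w'.ofLp ⬝ᵥ P i *ᵥ x.ofLp)|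
      ≤ ‖w - w'‖ * ‖x‖ := fun i =>
    calc _ ≤ |w.ofLp ⬝ᵥ P i *ᵥ x.ofLp - w'.ofLp ⬝ᵥ P i *ᵥ x.ofLp| := abs_lrelu_sub_lrelu_le hα _ _
      _ = |⟪w - w', toEuc (P i *ᵥ x.ofLp)⟫| := by
          rw [real_inner_toEuc, WithLp.ofLp_sub, sub_dotProduct]
      _ ≤ ‖w - w'‖ * ‖toEuc (P i *ᵥ x.ofLp)‖ := abs_real_inner_le_norm _ _
      _ ≤ ‖w - w'‖ * ‖x‖ := by gcongr; exact hP.norm_toEuc_mulVec_le i x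
  have hk : 1 / (k : ℝ) * k ≤ 1 := by
    rcases eq_or_ne (k : ℝ) 0 with h | h <;> simp [h]
  calc |convnet α P w x - convnet α P w' x|
      = 1 / k * |∑ i, (lrelu α (w.ofLp ⬝ᵥ P i *ᵥ x.ofLp)
          - lrelu α (w'.ofLp ⬝ᵥ P i *ᵥ x.ofLp))| := by
        rw [convnet, convnet, ← mul_sub, ← Finset.sum_sub_distrib, abs_mul,
          abs_of_nonneg (by positivity)]
    _ ≤ 1 / k * ∑ _i : Fin k, ‖w - w'‖ * ‖x‖ := by
        gcongr
        exact (Finset.abs_sum_le_sum_abs _ _).trans (Finset.sum_le_sum fun i _ => hpatch i)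
    _ = (1 / k * k) * (‖w - w'‖ * ‖x‖) := by
        rw [Finset.sum_const, Finset.card_univ, Fintype.card_fin, nsmul_eq_mul]; ring
    _ ≤ ‖w - w'‖ * ‖x‖ := mul_le_of_le_one_left (by positivity) hk

lemma sq_convnet_sub_convnet_le (hP : IsPatchStruct P) (hα : |α| ≤ 1)
    (w w' : EuclideanSpace ℝ (Fin r)) (x : EuclideanSpace ℝ (Fin n)) :
    (convnet α P w x - convnet α P w' x) ^ 2 ≤ ‖w - w'‖ ^ 2 * ‖x‖ ^ 2 := by
  rw [← mul_pow, ← sq_abs]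
  exact pow_le_pow_left₀ (abs_nonneg _) (abs_convnet_sub_convnet_le hP hα w w' x) 2

lemma integrable_convnet_sub_mul_inner (hP : IsPatchStruct P) (hα : |α| ≤ 1)
    (hμ : Integrable (fun x => ‖x‖ ^ 2) μ) (w w' u : EuclideanSpace ℝ (Fin r))
    (M : Matrix (Fin r) (Fin n) ℝ) :
    Integrable (fun x => (convnet α P w x - convnet α P w' x) * ⟪u, toEuc (M *ᵥ x.ofLp)⟫) μ := by
  obtain ⟨C, hC⟩ := exists_norm_toEuc_mulVec_le M
  have hcont := ((continuous_convnet α P w).sub (continuous_convnet α P w')).mul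
    ((continuous_const (y := u)).inner (continuous_toEuc_mulVec M))
  refine (hμ.const_mul (‖w - w'‖ * (‖u‖ * C))).mono' hcont.aestronglyMeasurable
    (ae_of_all _ fun x => ?_)
  rw [norm_mul, Real.norm_eq_abs, Real.norm_eq_abs]
  calc _ ≤ (‖w - w'‖ * ‖x‖) * (‖u‖ * (C * ‖x‖)) :=
        mul_le_mul (abs_convnet_sub_convnet_le hP hα w w' x) ((abs_real_inner_le_norm _ _).trans
          (mul_le_mul_of_nonneg_left (hC x) (norm_nonneg _))) (abs_nonneg _) (by positivity)
    _ = ‖w - w'‖ * (‖u‖ * C) * ‖x‖ ^ 2 := by ring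

lemma integrable_convnet_sub_sq_mul_norm_sq (hP : IsPatchStruct P) (hα : |α| ≤ 1)
    (hμ : Integrable (fun x => ‖x‖ ^ 4) μ) (w w' : EuclideanSpace ℝ (Fin r))
    (M : Matrix (Fin r) (Fin n) ℝ) :
    Integrable (fun x => (convnet α P w x - convnet α P w' x) ^ 2 * ‖toEuc (M *ᵥ x.ofLp)‖ ^ 2)
      μ := by
  obtain ⟨C, hC⟩ := exists_norm_toEuc_mulVec_le M
  have hcont := (((continuous_convnet α P w).sub (continuous_convnet α P w')).pow 2).mul
    ((continuous_toEuc_mulVec M).norm.pow 2)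
  refine (hμ.const_mul ((‖w - w'‖ * C) ^ 2)).mono' hcont.aestronglyMeasurable
    (ae_of_all _ fun x => ?_)
  rw [Real.norm_eq_abs, abs_of_nonneg (by positivity)]
  calc _ ≤ (‖w - w'‖ ^ 2 * ‖x‖ ^ 2) * (C * ‖x‖) ^ 2 :=
        mul_le_mul (sq_convnet_sub_convnet_le hP hα w w' x)
          (pow_le_pow_left₀ (norm_nonneg _) (hC x) 2) (sq_nonneg _) (by positivity)
    _ = (‖w - w'‖ * C) ^ 2 * ‖x‖ ^ 4 := by ring

lemma integral_convnet_sub_mul_inner [μ.IsNegInvariant] (hP : IsPatchStruct P) (hα : |α| ≤ 1)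
    (hμ : Integrable (fun x => ‖x‖ ^ 2) μ) (w w' : EuclideanSpace ℝ (Fin r)) :
    ∫ x, (convnet α P w' x - convnet α P w x) * ⟪w - w', toEuc ((∑ i, P i) *ᵥ x.ofLp)⟫ ∂μ
      = -((1 + α) / k) / 2
        * ((w - w').ofLp ⬝ᵥ (∑ i, ∑ j, P i * covMat μ * (P j)ᵀ) *ᵥ (w - w').ofLp) := by
  have hodd : ∀ x, (convnet α P w' x - convnet α P w x)
      - (convnet α P w' (-x) - convnet α P w (-x))
      = -((1 + α) / k) * ⟪w - w', toEuc ((∑ i, P i) *ᵥ x.ofLp)⟫ := fun x => by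
    rw [sub_sub_sub_comm, convnet_sub_convnet_neg, convnet_sub_convnet_neg, real_inner_toEuc,
      WithLp.ofLp_sub, sub_dotProduct]
    ring
  rw [integral_mul_odd_eq_half (fun x => by simp [mulVec_neg, toEuc])
    (integrable_convnet_sub_mul_inner hP hα hμ w' w _ _)]
  simp_rw [hodd, mul_assoc, ← sq]
  rw [integral_const_mul, integral_inner_toEuc_mulVec_sq hμ, sum_sum_mul_mul_transpose]
  ring

lemma integral_convnet_sub_sq_mul_norm_sq_le (hP : IsPatchStruct P) (hα : |α| ≤ 1)
    (hPmat : (∑ i, ∑ j, P i * (P j)ᵀ).IsHermitian) (hμ : Integrable (fun x => ‖x‖ ^ 4) μ)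
    (w w' : EuclideanSpace ℝ (Fin r)) :
    ∫ x, (convnet α P w x - convnet α P w' x) ^ 2 * ‖toEuc ((∑ i, P i) *ᵥ x.ofLp)‖ ^ 2 ∂μ
      ≤ lamMax (∑ i, ∑ j, P i * (P j)ᵀ) hPmat * ‖w - w'‖ ^ 2 * ∫ x, ‖x‖ ^ 4 ∂μ := by
  rw [← integral_const_mul]
  refine integral_mono (integrable_convnet_sub_sq_mul_norm_sq hP hα hμ w w' _)
    (hμ.const_mul _) fun x => ?_
  have hPP : ∑ i, ∑ j, P i * (P j)ᵀ = (∑ i, P i) * (∑ i, P i)ᵀ := by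
    simpa only [Matrix.mul_one] using sum_sum_mul_mul_transpose P 1
  calc _ ≤ (‖w - w'‖ ^ 2 * ‖x‖ ^ 2) * (lamMax _ hPmat * ‖x‖ ^ 2) :=
        mul_le_mul (sq_convnet_sub_convnet_le hP hα w w' x)
          (norm_toEuc_mulVec_sq_le_lamMax hPmat _ hPP x) (sq_nonneg _) (by positivity)
    _ = _ := by ring

end Convnet

theorem stmt8_general {n r k : ℕ} (P : Fin k → Matrix (Fin r) (Fin n) ℝ)
    (hP : IsPatchStruct P) (α : ℝ) (hα : α ∈ Set.Icc (0 : ℝ) 1)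
    (μ : Measure (EuclideanSpace ℝ (Fin n))) [IsProbabilityMeasure μ]
    (hsymm : μ.map (fun x => -x) = μ)
    (hmom : Integrable (fun x => ‖x‖ ^ 4) μ)
    (hPSig : (∑ i, ∑ j, P i * covMat μ * (P j)ᵀ).IsHermitian)
    (hPmat : (∑ i, ∑ j, P i * (P j)ᵀ).IsHermitian)
    (w wstar : EuclideanSpace ℝ (Fin r)) (η : ℝ) (hη : 0 < η) :
    ∫ x, ‖(w + η • ((convnet α P wstar x - convnet α P w x) • toEuc ((∑ i, P i).mulVec x)))
        - wstar‖ ^ 2 ∂μ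
      ≤ (1 - η * ((1 + α) / k) * lamMin (∑ i, ∑ j, P i * covMat μ * (P j)ᵀ) hPSig
            + η ^ 2 * lamMax (∑ i, ∑ j, P i * (P j)ᵀ) hPmat * ∫ x, ‖x‖ ^ 4 ∂μ)
          * ‖w - wstar‖ ^ 2 := by
  obtain ⟨hα0, hα1⟩ := hα
  have hα' : |α| ≤ 1 := abs_le.2 ⟨by linarith, hα1⟩
  have : μ.IsNegInvariant := ⟨hsymm⟩
  have hmom2 := hmom.sq_of_pow_four (by fun_prop)
  have hupdate : ∀ x, w + η • ((convnet α P wstar x - convnet α P w x)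
      • toEuc ((∑ i, P i) *ᵥ x.ofLp)) - wstar
      = (w - wstar) + (η * (convnet α P wstar x - convnet α P w x))
        • toEuc ((∑ i, P i) *ᵥ x.ofLp) := fun x => by
    rw [smul_smul, add_sub_right_comm]
  simp_rw [hupdate]
  rw [integral_norm_add_smul_sq _ _ (integrable_convnet_sub_mul_inner hP hα' hmom2 _ _ _ _)
    (integrable_convnet_sub_sq_mul_norm_sq hP hα' hmom _ _ _),
    integral_convnet_sub_mul_inner hP hα' hmom2]
  have hquad := lamMin_mul_dotProduct_self_le hPSig (w - wstar).ofLp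
  rw [← real_norm_sq_eq_dotProduct] at hquad
  have hsq := integral_convnet_sub_sq_mul_norm_sq_le hP hα' hPmat hmom wstar w
  rw [norm_sub_rev wstar] at hsq
  have hc : 0 ≤ η * ((1 + α) / k) := by positivity
  linarith [mul_le_mul_of_nonneg_left hquad hc, mul_le_mul_of_nonneg_left hsq (sq_nonneg η)]

/-- One-step progress of the realizable Convotron update: for
`w' = w + η·(f_{w*}(x) − f_w(x))·∑ᵢPᵢx`,
`E[‖w' − w*‖²] ≤ (1 − η·((1+α)/k)·λ_min(P_Σ) + η²·λ_max(P)·E[‖x‖⁴])·‖w − w*‖²`. -/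
theorem stmt8 {n r k : ℕ} (hk : 0 < k) (P : Fin k → Matrix (Fin r) (Fin n) ℝ)
    (hP : IsPatchStruct P) (α : ℝ) (hα : α ∈ Set.Icc (0 : ℝ) 1)
    (μ : Measure (EuclideanSpace ℝ (Fin n))) [IsProbabilityMeasure μ]
    (hsymm : μ.map (fun x => -x) = μ)
    (hmom : Integrable (fun x => ‖x‖ ^ 4) μ)
    (hPSig : (∑ i, ∑ j, P i * covMat μ * (P j)ᵀ).IsHermitian)
    (hPmat : (∑ i, ∑ j, P i * (P j)ᵀ).IsHermitian)
    (w wstar : EuclideanSpace ℝ (Fin r)) (η : ℝ) (hη : 0 < η) :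
    ∫ x, ‖(w + η • ((convnet α P wstar x - convnet α P w x) • toEuc ((∑ i, P i).mulVec x)))
        - wstar‖ ^ 2 ∂μ
      ≤ (1 - η * ((1 + α) / k) * lamMin (∑ i, ∑ j, P i * covMat μ * (P j)ᵀ) hPSig
            + η ^ 2 * lamMax (∑ i, ∑ j, P i * (P j)ᵀ) hPmat * ∫ x, ‖x‖ ^ 4 ∂μ)
          * ‖w - wstar‖ ^ 2 :=
  stmt8_general P hP α hα μ hsymm hmom hPSig hPmat w wstar η hη
end
end

section
/- Let P₁,…,P_k ∈ {0,1}^{r×n} be a patch structure such that patch 1 is disjoint from all other patches, i.e., P₁Pⱼᵀ = 0 for all j ≠ 1. Let α ∈ [0,1], f_w(x) = (1/k)·Σ_{i=1}^k σ_α(wᵀPᵢx), and let μ be a probability measure on ℝⁿ symmetric about the origin with covariance Σ = E_{x∼μ}[xxᵀ] equal to the identity matrix. Then for all w, w* ∈ ℝ^r, E_{x∼μ}[(f_{w*}(x) − f_w(x))·((w* − w)ᵀP₁x)] = ((1+α)/(2k))·‖w* − w‖². -/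
open MeasureTheory Matrix Finset
open scoped RealInnerProductSpace

noncomputable section

/-! Since `σ_α(z) = (1+α)/2 · z + (1-α)/2 · |z|`, the term `|aᵀx| · eᵀx` is odd in `x` and
integrates to zero under a symmetric measure, while the linear part gives
`E[(aᵀx)(eᵀx)] = aᵀΣe = aᵀe`. With `v = w* − w`, the `i`-th patch thus contributes
`(1+α)/2 · vᵀPᵢP₁ᵀv`, which is `(1+α)/2 · ‖v‖²` for `i = 1` (as `P₁P₁ᵀ = I`) and `0` otherwise. -/

lemma lrelu_eq_add_abs (α z : ℝ) : lrelu α z = (1 + α) / 2 * z + (1 - α) / 2 * |z| := by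
  rcases le_or_gt 0 z with hz | hz
  · rw [lrelu, if_pos hz, abs_of_nonneg hz]; ring
  · rw [lrelu, if_neg hz.not_ge, abs_of_neg hz]; ring

lemma integral_eq_zero_of_odd {G : Type*} [MeasurableSpace G] [AddGroup G] [MeasurableNeg G]
    {μ : Measure G} [μ.IsNegInvariant] {f : G → ℝ}
    (hf : ∀ x, f (-x) = -f x) : ∫ x, f x ∂μ = 0 := by
  have h := integral_neg_eq_self f μ
  simp_rw [hf, integral_neg] at h
  linarith

namespace IsPatchStruct

variable {r n k : ℕ} {P : Fin k → Matrix (Fin r) (Fin n) ℝ}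

lemma mul_transpose_self (hP : IsPatchStruct P) (i : Fin k) : P i * (P i)ᵀ = 1 := by
  obtain ⟨h01, hrow, hcol⟩ := hP
  ext a a'
  rw [mul_apply, one_apply]
  by_cases haa' : a = a'
  · subst haa'
    obtain ⟨b₀, hb₀, huniq⟩ := hrow i a
    rw [if_pos rfl, Finset.sum_eq_single b₀, transpose_apply, hb₀, mul_one]
    · intro b _ hb
      rcases h01 i a b with h | h
      · rw [transpose_apply, h, zero_mul]
      · exact absurd (huniq b h) hb
    · exact absurd (mem_univ b₀)
  · rw [if_neg haa']
    refine Finset.sum_eq_zero fun b _ => ?_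
    rw [transpose_apply]
    rcases h01 i a b with h | h
    · rw [h, zero_mul]
    rcases h01 i a' b with h' | h'
    · rw [h', mul_zero]
    · exact absurd (hcol i b a a' h h') haa'

lemma sum_vecMul_dotProduct_vecMul (hP : IsPatchStruct P) {z : Fin k}
    (hdisj : ∀ j, j ≠ z → P z * (P j)ᵀ = 0) (v : Fin r → ℝ) :
    ∑ i, vecMul v (P i) ⬝ᵥ vecMul v (P z) = v ⬝ᵥ v := by
  have hquad : ∀ i, vecMul v (P i) ⬝ᵥ vecMul v (P z) = v ⬝ᵥ (P z * (P i)ᵀ) *ᵥ v := fun i => by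
    rw [dotProduct_comm, ← mulVec_mulVec, mulVec_transpose, dotProduct_mulVec]
  rw [Finset.sum_eq_single z (fun i _ hi => by rw [hquad, hdisj i hi, zero_mulVec, dotProduct_zero])
    (absurd (mem_univ z)), hquad, hP.mul_transpose_self, one_mulVec]

end IsPatchStruct

section SecondMoments

variable {n : ℕ} {μ : Measure (EuclideanSpace ℝ (Fin n))}

lemma memLp_two_apply (hmom : Integrable (fun x => ‖x‖ ^ 2) μ) (j : Fin n) :
    MemLp (fun x : EuclideanSpace ℝ (Fin n) => x j) 2 μ :=
  (EuclideanSpace.proj (𝕜 := ℝ) j).comp_memLp'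
    ((memLp_two_iff_integrable_sq_norm aestronglyMeasurable_id).2 hmom)

lemma memLp_two_dotProduct (hmom : Integrable (fun x => ‖x‖ ^ 2) μ) (c : Fin n → ℝ) :
    MemLp (fun x : EuclideanSpace ℝ (Fin n) => c ⬝ᵥ x) 2 μ :=
  memLp_finsetSum _ fun j _ => (memLp_two_apply hmom j).const_mul (c j)

lemma memLp_two_lrelu_dotProduct (hmom : Integrable (fun x => ‖x‖ ^ 2) μ) (α : ℝ)
    (c : Fin n → ℝ) : MemLp (fun x : EuclideanSpace ℝ (Fin n) => lrelu α (c ⬝ᵥ x)) 2 μ := by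
  simp_rw [lrelu_eq_add_abs]
  have hc := memLp_two_dotProduct hmom c
  exact (hc.const_mul _).add (hc.norm.const_mul _)

lemma integral_dotProduct_mul_dotProduct (hmom : Integrable (fun x => ‖x‖ ^ 2) μ)
    (d e : Fin n → ℝ) : ∫ x, (d ⬝ᵥ x) * (e ⬝ᵥ x) ∂μ = d ⬝ᵥ covMat μ *ᵥ e := by
  have hint (j l : Fin n) : Integrable (fun x : EuclideanSpace ℝ (Fin n) => x j * x l) μ :=
    (memLp_two_apply hmom j).integrable_mul (memLp_two_apply hmom l)
  have hexpand (x : EuclideanSpace ℝ (Fin n)) :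
      (d ⬝ᵥ x) * (e ⬝ᵥ x) = ∑ j, d j * ∑ l, x j * x l * e l := by
    rw [dotProduct, dotProduct, Finset.sum_mul_sum]
    simp only [Finset.mul_sum]
    exact Finset.sum_congr rfl fun j _ => Finset.sum_congr rfl fun l _ => by ring
  simp_rw [hexpand]
  rw [integral_finsetSum _ fun j _ =>
    (integrable_finsetSum _ fun l _ => (hint j l).mul_const _).const_mul _]
  refine Finset.sum_congr rfl fun j _ => ?_
  rw [integral_const_mul, integral_finsetSum _ fun l _ => (hint j l).mul_const _]
  simp only [integral_mul_const, mulVec, dotProduct, covMat, of_apply]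

end SecondMoments

section Symmetric

variable {n : ℕ} {μ : Measure (EuclideanSpace ℝ (Fin n))} [μ.IsNegInvariant]

lemma integral_lrelu_dotProduct_mul_dotProduct (hmom : Integrable (fun x => ‖x‖ ^ 2) μ)
    (hcov : covMat μ = 1) (α : ℝ) (a e : Fin n → ℝ) :
    ∫ x, lrelu α (a ⬝ᵥ x) * (e ⬝ᵥ x) ∂μ = (1 + α) / 2 * (a ⬝ᵥ e) := by
  have ha := memLp_two_dotProduct hmom a
  have he := memLp_two_dotProduct hmom e
  have hlin : Integrable (fun x : EuclideanSpace ℝ (Fin n) => (a ⬝ᵥ x) * (e ⬝ᵥ x)) μ :=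
    ha.integrable_mul he
  have habs : Integrable (fun x : EuclideanSpace ℝ (Fin n) => |a ⬝ᵥ x| * (e ⬝ᵥ x)) μ :=
    ha.norm.integrable_mul he
  have hodd : ∫ x, |a ⬝ᵥ x| * (e ⬝ᵥ x) ∂μ = 0 :=
    integral_eq_zero_of_odd fun x => by
      simp only [WithLp.ofLp_neg, dotProduct_neg, abs_neg, mul_neg]
  simp_rw [lrelu_eq_add_abs, add_mul, mul_assoc]
  rw [integral_add (hlin.const_mul _) (habs.const_mul _),
    integral_const_mul, integral_const_mul, integral_dotProduct_mul_dotProduct hmom, hcov,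
    one_mulVec, hodd, mul_zero, add_zero]

end Symmetric

theorem stmt18_general {n r k : ℕ} (hk : 0 < k) (P : Fin k → Matrix (Fin r) (Fin n) ℝ)
    (hP : IsPatchStruct P)
    (hdisj : ∀ j : Fin k, j ≠ ⟨0, hk⟩ → P ⟨0, hk⟩ * (P j)ᵀ = 0)
    (α : ℝ)
    (μ : Measure (EuclideanSpace ℝ (Fin n)))
    (hsymm : μ.map (fun x => -x) = μ)
    (hmom : Integrable (fun x => ‖x‖ ^ 2) μ)
    (hcov : covMat μ = 1)
    (w wstar : EuclideanSpace ℝ (Fin r)) :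
    ∫ x, (convnet α P wstar x - convnet α P w x)
        * ((fun j => wstar j - w j) ⬝ᵥ (P ⟨0, hk⟩).mulVec x) ∂μ
      = (1 + α) / (2 * k) * ‖wstar - w‖ ^ 2 := by
  have : μ.IsNegInvariant := ⟨hsymm⟩
  set v : Fin r → ℝ := wstar - w
  set e := vecMul v (P ⟨0, hk⟩)
  have hterm (u : Fin r → ℝ) (i : Fin k) :
      Integrable (fun x : EuclideanSpace ℝ (Fin n) => lrelu α (vecMul u (P i) ⬝ᵥ x) * (e ⬝ᵥ x)) μ :=
    (memLp_two_lrelu_dotProduct hmom α _).integrable_mul (memLp_two_dotProduct hmom e)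
  have hdiff (i : Fin k) : Integrable (fun x : EuclideanSpace ℝ (Fin n) =>
      lrelu α (vecMul wstar (P i) ⬝ᵥ x) * (e ⬝ᵥ x) - lrelu α (vecMul w (P i) ⬝ᵥ x) * (e ⬝ᵥ x)) μ :=
    (hterm _ i).sub (hterm _ i)
  calc _ = ∫ x, (1 / k : ℝ) * ∑ i, (lrelu α (vecMul wstar (P i) ⬝ᵥ x) * (e ⬝ᵥ x)
              - lrelu α (vecMul w (P i) ⬝ᵥ x) * (e ⬝ᵥ x)) ∂μ := by
        simp only [convnet, dotProduct_mulVec, ← mul_sub, ← Finset.sum_sub_distrib, mul_assoc,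
          Finset.sum_mul, sub_mul]
        rfl
    _ = (1 / k : ℝ) * ∑ i, (1 + α) / 2 * (vecMul v (P i) ⬝ᵥ e) := by
        rw [integral_const_mul, integral_finsetSum _ fun i _ => hdiff i]
        refine congrArg _ (Finset.sum_congr rfl fun i _ => ?_)
        rw [integral_sub (hterm _ i) (hterm _ i),
          integral_lrelu_dotProduct_mul_dotProduct hmom hcov,
          integral_lrelu_dotProduct_mul_dotProduct hmom hcov, ← mul_sub, ← sub_dotProduct,
          ← sub_vecMul]
    _ = (1 + α) / (2 * k) * (v ⬝ᵥ v) := by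
        rw [← Finset.mul_sum, hP.sum_vecMul_dotProduct_vecMul hdisj]
        field_simp
    _ = (1 + α) / (2 * k) * ‖wstar - w‖ ^ 2 := by
        rw [← real_inner_self_eq_norm_sq, EuclideanSpace.inner_eq_star_dotProduct, star_trivial,
          WithLp.ofLp_sub]

/-- If patch 1 is disjoint from all other patches (`P₁Pⱼᵀ = 0` for
`j ≠ 1`) and `μ` is symmetric with identity covariance, then
`E[(f_{w*}(x) − f_w(x))·((w*−w)ᵀP₁x)] = ((1+α)/(2k))·‖w*−w‖²`. -/
theorem stmt18 {n r k : ℕ} (hk : 0 < k) (P : Fin k → Matrix (Fin r) (Fin n) ℝ)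
    (hP : IsPatchStruct P)
    (hdisj : ∀ j : Fin k, j ≠ ⟨0, hk⟩ → P ⟨0, hk⟩ * (P j)ᵀ = 0)
    (α : ℝ) (hα : α ∈ Set.Icc (0 : ℝ) 1)
    (μ : Measure (EuclideanSpace ℝ (Fin n))) [IsProbabilityMeasure μ]
    (hsymm : μ.map (fun x => -x) = μ)
    (hmom : Integrable (fun x => ‖x‖ ^ 2) μ)
    (hcov : covMat μ = 1)
    (w wstar : EuclideanSpace ℝ (Fin r)) :
    ∫ x, (convnet α P wstar x - convnet α P w x)
        * ((fun j => wstar j - w j) ⬝ᵥ (P ⟨0, hk⟩).mulVec x) ∂μ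
      = (1 + α) / (2 * k) * ‖wstar - w‖ ^ 2 :=
  stmt18_general hk P hP hdisj α μ hsymm hmom hcov w wstar
end
end
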